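/- Let K/F be a CM-extension of number fields that is cyclic of degree 2^{n+1} and is contained in a Galois extension K/k whose Galois group is the generalized quaternion group Q_{2^{n+2}}, with the unique complex conjugation corresponding to x^{2^n}. Then the only roots of unity in K are ±1. -/

import Mathlib

/-!
Every automorphism of `K` acts on a root of unity `ζ` of order `d` as a power `ζ ↦ ζ ^ c`, and
`σ ↦ c` is a homomorphism into the abelian group `(ZMod d)ˣ`. Since `y x y⁻¹ = x⁻¹` in the
quaternion group, every homomorphism to an abelian group sends `x` to an element of order
dividing `2`, hence kills the even power `x ^ 2 ^ n`. So complex conjugation `x ^ 2 ^ n` both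
fixes and inverts `ζ`, forcing `ζ ^ 2 = 1`.
-/

theorem MonoidHom.map_sq_eq_one_of_mul_eq_inv_mul {G A : Type*} [Group G] [CommGroup A]
    (f : G →* A) {g h : G} (hgh : h * g = g⁻¹ * h) : f g ^ 2 = 1 := by
  have hfg : f g = (f g)⁻¹ :=
    mul_left_cancel (a := f h) (by rw [← map_mul, hgh, map_mul, map_inv, mul_comm])
  rw [sq, mul_eq_one_iff_eq_inv]
  exact hfg

namespace QuaternionGroup

theorem xa_mul_a_eq_inv_mul {n : ℕ} (i j : ZMod (2 * n)) : xa i * a j = (a j)⁻¹ * xa i := by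
  rw [xa_mul_a]
  show _ = a (-j) * xa i
  rw [a_mul_xa, sub_neg_eq_add]

theorem map_a_one_pow_eq_one_of_even {A : Type*} [CommGroup A] {n k : ℕ}
    (f : QuaternionGroup n →* A) (hk : Even k) : f (a 1 ^ k) = 1 := by
  obtain ⟨l, rfl⟩ := hk.two_dvd
  rw [map_pow, pow_mul, f.map_sq_eq_one_of_mul_eq_inv_mul (xa_mul_a_eq_inv_mul 0 1), one_pow]

end QuaternionGroup

theorem IsPrimitiveRoot.apply_eq_self_of_autToPow_eq_one {R S : Type*} [CommRing R] [CommRing S]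
    [IsDomain S] [Algebra R S] {μ : S} {n : ℕ} [NeZero n] (hμ : IsPrimitiveRoot μ n)
    {σ : S ≃ₐ[R] S} (hσ : hμ.autToPow R σ = 1) : σ μ = μ := by
  rw [← hμ.autToPow_spec R σ, hσ, Units.val_one, ZMod.val_one_eq_one_mod, hμ.eq_orderOf,
    pow_mod_orderOf, pow_one]

theorem roots_of_unity_of_quaternion_CM_general (n : ℕ) (hn : 1 ≤ n)
    (k K : Type) [Field k] [Field K] [Algebra k K]
    (e : (K ≃ₐ[k] K) ≃* QuaternionGroup (2 ^ n))
    (hj : ∀ ζ : K, (∃ m : ℕ, 0 < m ∧ ζ ^ m = 1) →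
      e.symm (QuaternionGroup.a 1 ^ 2 ^ n) ζ = ζ⁻¹) :
    ∀ ζ : K, (∃ m : ℕ, 0 < m ∧ ζ ^ m = 1) → ζ = 1 ∨ ζ = -1 := by
  intro ζ hζ
  obtain ⟨m, hm, hζm⟩ := hζ
  have hζ_ne_zero : ζ ≠ 0 := by rintro rfl; simp [hm.ne'] at hζm
  have : NeZero (orderOf ζ) :=
    ⟨(isOfFinOrder_iff_pow_eq_one.mpr ⟨m, hm, hζm⟩).orderOf_pos.ne'⟩
  have hprim : IsPrimitiveRoot ζ (orderOf ζ) := IsPrimitiveRoot.orderOf ζ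
  have hfix : e.symm (QuaternionGroup.a 1 ^ 2 ^ n) ζ = ζ :=
    hprim.apply_eq_self_of_autToPow_eq_one <|
      QuaternionGroup.map_a_one_pow_eq_one_of_even ((hprim.autToPow k).comp e.symm.toMonoidHom)
        (Nat.even_pow.mpr ⟨even_two, by omega⟩)
  have hinv : ζ⁻¹ = ζ := (hj ζ ⟨m, hm, hζm⟩).symm.trans hfix
  rcases inv_eq_self₀.mp hinv with h | h | h
  · exact .inr h
  · exact absurd h hζ_ne_zero
  · exact .inl h

/-- Let `K/k` be a Galois CM-extension of number fields whose Galois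
group is the generalized quaternion group `Q_{2^{n+2}}` (Mathlib's
`QuaternionGroup (2^n)`, `x = QuaternionGroup.a 1`), the unique complex conjugation
corresponding to the central element `x^{2^n}` — i.e. the automorphism corresponding
to `x^{2^n}` inverts every root of unity of `K` (so that `K` is CM over the fixed
field `F` of the cyclic subgroup `⟨x⟩` of order `2^{n+1}`). Then the only roots of
unity in `K` are `±1`. -/
theorem roots_of_unity_of_quaternion_CM (n : ℕ) (hn : 1 ≤ n)
    (k K : Type) [Field k] [Field K] [NumberField k] [NumberField K]
    [Algebra k K] [IsGalois k K]
    (e : (K ≃ₐ[k] K) ≃* QuaternionGroup (2 ^ n))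
    (hj : ∀ ζ : K, (∃ m : ℕ, 0 < m ∧ ζ ^ m = 1) →
      e.symm (QuaternionGroup.a 1 ^ 2 ^ n) ζ = ζ⁻¹) :
    ∀ ζ : K, (∃ m : ℕ, 0 < m ∧ ζ ^ m = 1) → ζ = 1 ∨ ζ = -1 :=
  roots_of_unity_of_quaternion_CM_general n hn k K e hj
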